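/- Let n ≥ 3 be an integer and let m be a positive integer coprime to b. If U_n divides m, then n divides τ(m). -/
import Mathlib


/-- The first Lucas sequence with parameters `(a, b)`:
`U 0 = 0`, `U 1 = 1`, `U (k+2) = a * U (k+1) + b * U k`. -/
def U (a b : ℤ) : ℕ → ℤ
  | 0 => 0
  | 1 => 1
  | (k + 2) => a * U a b (k + 1) + b * U a b k

/-- The second Lucas sequence with parameters `(a, b)`:
`V 0 = 2`, `V 1 = a`, `V (k+2) = a * V (k+1) + b * V k`. -/
def V (a b : ℤ) : ℕ → ℤ
  | 0 => 2
  | 1 => a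
  | (k + 2) => a * V a b (k + 1) + b * V a b k

/-- The order of appearance of `m` in the first Lucas sequence with parameters `(a, b)`:
the smallest positive integer `k` such that `m ∣ U a b k`. -/
noncomputable def tau (a b : ℤ) (m : ℤ) : ℕ :=
  sInf {k : ℕ | 0 < k ∧ m ∣ U a b k}

/-- The pair `(a, b)` is nondegenerate: `b ≠ 0` and
`(a, b) ∉ {(±2, -1), (±1, -1), (0, ±1), (±1, 0)}`. -/
def Nondegenerate (a b : ℤ) : Prop :=
  b ≠ 0 ∧ (a, b) ∉ ({(2, -1), (-2, -1), (1, -1), (-1, -1),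
    (0, 1), (0, -1), (1, 0), (-1, 0)} : Set (ℤ × ℤ))

lemma U_zero (a b : ℤ) : U a b 0 = 0 := rfl
lemma U_one (a b : ℤ) : U a b 1 = 1 := rfl
lemma U_rec (a b : ℤ) (k : ℕ) : U a b (k+2) = a * U a b (k+1) + b * U a b k := rfl

lemma U_cop_b (a b : ℤ) (hab : IsCoprime a b) : ∀ k, IsCoprime (U a b (k+1)) b := by
  intro k
  induction k with
  | zero => simpa [U_one] using isCoprime_one_left
  | succ k ih =>
    rw [U_rec]
    exact (hab.mul_left ih).add_mul_left_left (U a b k)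

lemma U_cop_succ (a b : ℤ) (hab : IsCoprime a b) : ∀ k, IsCoprime (U a b k) (U a b (k+1)) := by
  intro k
  induction k with
  | zero => rw [U_zero]; exact isCoprime_zero_left.mpr isUnit_one
  | succ k ih =>
    rw [U_rec, add_comm (a * U a b (k+1)), mul_comm a]
    exact ((U_cop_b a b hab k).mul_right ih.symm).add_mul_left_right a

lemma U_add (a b : ℤ) : ∀ n m, U a b (m + (n+1)) = U a b (n+1) * U a b (m+1) + b * U a b n * U a b m := by
  intro n
  induction n using Nat.twoStepInduction with
  | zero => intro m; simp [U_zero, U_one]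
  | one => intro m; rw [show m + 2 = m + 1 + 1 from rfl, U_rec, show U a b 2 = a by rw [U_rec, U_one, U_zero]; ring, U_one]; ring
  | more n ih1 ih2 =>
    intro m
    rw [show m + (n+2+1) = (m + (n+1)) + 2 by ring, U_rec,
      show m + (n+1) + 1 = m + (n+1+1) by ring, ih2, ih1,
      U_rec a b (n+1), U_rec a b n]
    ring

lemma U_pos_aux (a b : ℤ) (ha : 1 ≤ a) (hΔ : 0 < a^2 + 4*b) :
    ∀ k, 0 < U a b (k+1) ∧ a * U a b (k+1) ≤ 2 * U a b (k+2) := by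
  intro k
  induction k with
  | zero =>
    refine ⟨by rw [U_one]; norm_num, ?_⟩
    rw [U_one, show U a b 2 = a by rw [U_rec, U_one, U_zero]; ring]
    linarith
  | succ k ih =>
    obtain ⟨h1, h2⟩ := ih
    have hU2 : 0 < U a b (k+2) := by nlinarith
    refine ⟨hU2, ?_⟩
    rw [U_rec a b (k+1)]
    rcases le_or_gt b 0 with hbneg | hbpos
    · have ha2 : 1 - 4*b ≤ a^2 := by linarith
      have hm : (1 - 4*b) * U a b (k+1) ≤ a^2 * U a b (k+1) :=
        mul_le_mul_of_nonneg_right ha2 h1.le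
      have hm2 : a * (a * U a b (k+1)) ≤ a * (2 * U a b (k+2)) :=
        mul_le_mul_of_nonneg_left h2 (by linarith)
      nlinarith
    · nlinarith

lemma U_lt_succ (a b : ℤ) (ha : 1 ≤ a) (hΔ : 0 < a^2 + 4*b) (hb : b ≠ 0) (k : ℕ) :
    U a b (k+2) < U a b (k+3) := by
  have h1 := (U_pos_aux a b ha hΔ k).1
  have h2 := (U_pos_aux a b ha hΔ (k+1)).1
  have h3 := (U_pos_aux a b ha hΔ (k+1)).2
  rcases lt_or_gt_of_ne hb with hbneg | hbpos
  · have ha3 : 3 ≤ a := by nlinarith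
    have : 3 * U a b (k+2) ≤ a * U a b (k+2) := by nlinarith
    linarith
  · rw [show U a b (k+3) = a * U a b (k+2) + b * U a b (k+1) from U_rec a b (k+1)]
    nlinarith

lemma U_mono (a b : ℤ) (ha : 1 ≤ a) (hΔ : 0 < a^2 + 4*b) (hb : b ≠ 0) :
    ∀ i j, 2 ≤ i → i < j → U a b i < U a b j := by
  intro i j h2 hij
  induction j, hij using Nat.le_induction with
  | base =>
    obtain ⟨k, rfl⟩ : ∃ k, i = k + 2 := ⟨i - 2, by omega⟩
    exact U_lt_succ a b ha hΔ hb k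
  | succ j hj ih =>
    obtain ⟨k, rfl⟩ : ∃ k, j = k + 2 := ⟨j - 2, by omega⟩
    exact lt_trans ih (U_lt_succ a b ha hΔ hb k)

lemma U_lt_of_lt (a b : ℤ) (ha : 1 ≤ a) (hΔ : 0 < a^2 + 4*b) (hb : b ≠ 0)
    (n r : ℕ) (hn : 3 ≤ n) (hr1 : 1 ≤ r) (hrn : r < n) : U a b r < U a b n := by
  rcases eq_or_lt_of_le hr1 with hr | hr
  · have h23 : U a b 2 < U a b 3 := U_lt_succ a b ha hΔ hb 0
    have h2a : U a b 2 = a := by rw [U_rec, U_one, U_zero]; ring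
    have h3n : U a b 3 ≤ U a b n := by
      rcases eq_or_lt_of_le hn with h | h
      · rw [h]
      · exact (U_mono a b ha hΔ hb 3 n (by norm_num) h).le
    rw [← hr, U_one]
    linarith
  · exact U_mono a b ha hΔ hb r n (by omega) hrn

lemma U_key (a b : ℤ) (s : ℕ) :
    ∀ q r : ℕ, U a b (s+1) ∣ U a b (q*(s+1)+r) - (b * U a b s)^q * U a b r := by
  intro q
  induction q with
  | zero => intro r; simp
  | succ q ih =>
    intro r
    rw [show (q+1)*(s+1)+r = (q*(s+1)+r) + (s+1) by ring, U_add a b s (q*(s+1)+r)]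
    obtain ⟨c, hc⟩ := ih r
    exact ⟨U a b (q*(s+1)+r+1) + b * U a b s * c, by linear_combination (b * U a b s) * hc⟩

lemma core1 (a b : ℤ) (ha : 1 ≤ a) (hab : IsCoprime a b) (hΔ : 0 < a^2 + 4*b) (hb : b ≠ 0)
    (n k : ℕ) (hn : 3 ≤ n) (h : U a b n ∣ U a b k) : n ∣ k := by
  obtain ⟨s, rfl⟩ : ∃ s, n = s + 1 := ⟨n - 1, by omega⟩
  obtain ⟨q, r, hrlt, hk⟩ : ∃ q r, r < s+1 ∧ q*(s+1)+r = k :=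
    ⟨k/(s+1), k%(s+1), Nat.mod_lt k (by omega), by
      rw [mul_comm]; exact Nat.div_add_mod k (s+1)⟩
  have h' : U a b (s+1) ∣ U a b (q*(s+1)+r) := by rw [hk]; exact h
  have hdr : U a b (s+1) ∣ (b * U a b s)^q * U a b r := by
    have h2 := h'.sub (U_key a b s q r)
    simpa using h2
  have hc1 : IsCoprime (U a b (s+1)) b := U_cop_b a b hab s
  have hc2 : IsCoprime (U a b (s+1)) (U a b s) := (U_cop_succ a b hab s).symm
  have hc : IsCoprime (U a b (s+1)) ((b * U a b s)^q) := (hc1.mul_right hc2).pow_right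
  have hr' : U a b (s+1) ∣ U a b r := hc.dvd_of_dvd_mul_left hdr
  rcases Nat.eq_zero_or_pos r with hr0 | hrpos
  · exact ⟨q, by rw [← hk, hr0, add_zero, mul_comm]⟩
  · exfalso
    obtain ⟨r', rfl⟩ : ∃ r', r = r' + 1 := ⟨r - 1, by omega⟩
    have hUrpos : 0 < U a b (r'+1) := (U_pos_aux a b ha hΔ r').1
    have hlt : U a b (r'+1) < U a b (s+1) :=
      U_lt_of_lt a b ha hΔ hb (s+1) (r'+1) hn (by omega) (by omega)
    have := Int.le_of_dvd hUrpos hr'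
    linarith

lemma U_neg (a b : ℤ) : ∀ k, U (-a) b k = (-1)^(k+1) * U a b k
  | 0 => by simp [U_zero]
  | 1 => by simp [U_one]
  | (k+2) => by
    rw [U_rec, U_neg a b (k+1), U_neg a b k, U_rec a b k]
    ring

lemma core (a b : ℤ) (hab : IsCoprime a b) (hΔ : 0 < a^2 + 4*b) (hnd : Nondegenerate a b)
    (n k : ℕ) (hn : 3 ≤ n) (h : U a b n ∣ U a b k) : n ∣ k := by
  have hb : b ≠ 0 := hnd.1
  rcases lt_trichotomy a 0 with ha | ha | ha
  · have habs : ∀ j, |U (-a) b j| = |U a b j| := by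
      intro j; rw [U_neg]; simp [abs_mul, abs_pow]
    have h' : U (-a) b n ∣ U (-a) b k := by
      rw [← abs_dvd, ← dvd_abs, habs, habs, abs_dvd, dvd_abs]; exact h
    exact core1 (-a) b (by omega) hab.neg_left (by rwa [neg_pow, neg_one_pow_eq_one_iff_even (by norm_num) |>.mpr ⟨1, rfl⟩, one_mul]) hb n k hn h'
  · subst ha
    have hu : IsUnit b := isCoprime_zero_left.mp hab
    rcases Int.isUnit_iff.mp hu with hb1 | hb1 <;> subst hb1
    · exact absurd (by simp : ((0:ℤ), (1:ℤ)) ∈ ({(2, -1), (-2, -1), (1, -1), (-1, -1),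
        (0, 1), (0, -1), (1, 0), (-1, 0)} : Set (ℤ × ℤ))) hnd.2
    · norm_num at hΔ
  · exact core1 a b (by omega) hab hΔ hb n k hn h

theorem dvd_tau_of_U_dvd (a b : ℤ) (hab : IsCoprime a b)
    (hΔ : 0 < a ^ 2 + 4 * b) (hnd : Nondegenerate a b)
    (n : ℕ) (hn : 3 ≤ n) (m : ℕ) (hm : 0 < m) (hmb : IsCoprime (m : ℤ) b)
    (hdvd : U a b n ∣ (m : ℤ)) :
    n ∣ tau a b (m : ℤ) := by
  rcases Set.eq_empty_or_nonempty {k : ℕ | 0 < k ∧ (m : ℤ) ∣ U a b k} with h | h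
  · unfold tau
    rw [h, Nat.sInf_empty]
    exact dvd_zero n
  · obtain ⟨hpos, hdvd'⟩ := Nat.sInf_mem h
    exact core a b hab hΔ hnd n _ hn (hdvd.trans hdvd')
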